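/- Let F be a co-bipartite graph with (A,B) a bipartition of the complement of F, let k be a nonnegative integer, and let G be the graph constructed from F, A, B and k as described, with K = k + |A|(|A|−1)/2 and C = {c_1, …, c_{K+1}}. If H is a minimum chordal completion of G and fill(H) ≤ K, then no fill edge of H has an endpoint in C ∪ {v}; in particular N_H(v) = N_G(v) = A. -/

import Mathlib

variable {V : Type*}

/-- `f : ZMod n → V` realizes an induced cycle of length `n` in `G`. -/
def IsInducedCycleMap (G : SimpleGraph V) (n : ℕ) (f : ZMod n → V) : Prop :=
  Function.Injective f ∧ ∀ i j : ZMod n, G.Adj (f i) (f j) ↔ (j = i + 1 ∨ i = j + 1)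

/-- A graph is chordal if it has no induced cycle of length at least four. -/
def Chordal (G : SimpleGraph V) : Prop :=
  ∀ n : ℕ, 4 ≤ n → ¬ ∃ f : ZMod n → V, IsInducedCycleMap G n f

/-- `S` is a vertex separator of `G`: two vertices outside `S` lie in distinct
connected components of `G - S`. -/
def IsSeparator (G : SimpleGraph V) (S : Set V) : Prop :=
  ∃ u w : ↥(Sᶜ), ¬ (G.induce Sᶜ).Reachable u w

/-- `S` is a minimal vertex separator of `G`. -/
def IsMinimalSeparator (G : SimpleGraph V) (S : Set V) : Prop :=
  ∃ (u w : V) (hu : u ∈ Sᶜ) (hw : w ∈ Sᶜ),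
    (¬ (G.induce Sᶜ).Reachable ⟨u, hu⟩ ⟨w, hw⟩) ∧
    ∀ (S' : Set V) (hss : S' ⊂ S),
      (G.induce S'ᶜ).Reachable
        ⟨u, Set.compl_subset_compl.mpr hss.subset hu⟩
        ⟨w, Set.compl_subset_compl.mpr hss.subset hw⟩

/-- `H` is a chordal completion of `G`: a chordal spanning supergraph. -/
def IsChordalCompletion (G H : SimpleGraph V) : Prop :=
  G ≤ H ∧ Chordal H

/-- `H` is a minimum chordal completion of `G`: no chordal completion has fewer edges. -/
def IsMinChordalCompletion (G H : SimpleGraph V) : Prop :=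
  IsChordalCompletion G H ∧
    ∀ H' : SimpleGraph V, IsChordalCompletion G H' →
      H.edgeSet.ncard ≤ H'.edgeSet.ncard

/-- The number of fill edges of a completion `H` of `G`. -/
noncomputable def fill (G H : SimpleGraph V) : ℕ :=
  H.edgeSet.ncard - G.edgeSet.ncard

/-- Auxiliary relation defining the gadget graph built from a co-bipartite graph `F`
with bipartition `(A, B)` of its complement: the vertices are
`V(F) ⊕ {c_1, …, c_{K+1}} ⊕ {v}`; the edges of `F` with both endpoints in `A` are
deleted, each `c_i` is made adjacent to every other vertex except `v`, and `v` is
adjacent exactly to the vertices of `A`. -/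
def gadgetRel {α : Type*} (F : SimpleGraph α) (A : Set α) (K : ℕ) :
    (α ⊕ Fin (K + 1) ⊕ Unit) → (α ⊕ Fin (K + 1) ⊕ Unit) → Prop
  | .inl u, .inl w => F.Adj u w ∧ ¬(u ∈ A ∧ w ∈ A)
  | .inl _, .inr (.inl _) => True
  | .inr (.inl _), .inr (.inl _) => True
  | .inl a, .inr (.inr _) => a ∈ A
  | _, _ => False

/-- The gadget graph `G` of the reduction. -/
def gadgetGraph {α : Type*} (F : SimpleGraph α) (A : Set α) (K : ℕ) :
    SimpleGraph (α ⊕ Fin (K + 1) ⊕ Unit) :=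
  SimpleGraph.fromRel (gadgetRel F A K)

/-! Since `fill H ≤ K < |C|`, some `c_j` is not adjacent to `v` in `H`. Any two vertices
`a, a'` of `A` then lie on the four-cycle `v a c_j a'` of `G`, whose only possible chord in `H`
is `a a'`; so `A` is a clique of `H`. Deleting from `H` all edges joining `v` to vertices outside
`A` keeps it a completion of `G` (as `N_G(v) = A`) and keeps it chordal (an induced cycle through
`v` would pass through two vertices of the clique `A`), so by minimality nothing is deleted and
`N_H(v) = A`. Finally `c_i` is adjacent in `G` to every vertex except `v`, so a fill edge at
`c_i` or at `v` would be an edge of `H` at `v` leaving `A`. -/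

theorem Chordal.adj_of_cycle4 {G : SimpleGraph V} (hG : Chordal G) {w₀ w₁ w₂ w₃ : V}
    (h₀₁ : G.Adj w₀ w₁) (h₁₂ : G.Adj w₁ w₂) (h₂₃ : G.Adj w₂ w₃) (h₃₀ : G.Adj w₃ w₀)
    (n₀₂ : w₀ ≠ w₂) (n₁₃ : w₁ ≠ w₃) (h₀₂ : ¬ G.Adj w₀ w₂) : G.Adj w₁ w₃ := by
  by_contra h₁₃
  have cases4 : ∀ i : ZMod 4, i = 0 ∨ i = 1 ∨ i = 2 ∨ i = 3 := by decide
  refine hG 4 le_rfl ⟨![w₀, w₁, w₂, w₃], fun i j hij => ?_, fun i j => ?_⟩ <;>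
    rcases cases4 i with rfl | rfl | rfl | rfl <;> rcases cases4 j with rfl | rfl | rfl | rfl
  all_goals simp_all [eq_comm, h₀₁.ne, h₁₂.ne, h₂₃.ne, G.adj_comm] <;> decide

theorem ZMod.natCast_ne_zero_of_pos_of_lt {m n : ℕ} (h₀ : 0 < m) (h : m < n) :
    (m : ZMod n) ≠ 0 := by
  rw [Ne, ZMod.natCast_eq_zero_iff]
  exact Nat.not_dvd_of_pos_of_lt h₀ h

namespace IsInducedCycleMap

variable {G : SimpleGraph V} {n : ℕ} {f : ZMod n → V}

theorem adj_succ (hf : IsInducedCycleMap G n f) (i : ZMod n) : G.Adj (f i) (f (i + 1)) :=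
  (hf.2 _ _).2 (Or.inl rfl)

theorem adj_pred (hf : IsInducedCycleMap G n f) (i : ZMod n) : G.Adj (f (i - 1)) (f i) := by
  simpa using hf.adj_succ (i - 1)

theorem pred_ne_succ (hf : IsInducedCycleMap G n f) (hn : 4 ≤ n) (i : ZMod n) :
    f (i - 1) ≠ f (i + 1) := fun h => by
  have h2 : ((2 : ℕ) : ZMod n) = 0 := by push_cast; linear_combination -hf.1 h
  exact ZMod.natCast_ne_zero_of_pos_of_lt (by norm_num) (by omega) h2

theorem not_adj_pred_succ (hf : IsInducedCycleMap G n f) (hn : 4 ≤ n) (i : ZMod n) :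
    ¬ G.Adj (f (i - 1)) (f (i + 1)) := fun h => by
  rcases (hf.2 _ _).1 h with h | h
  · have h1 : ((1 : ℕ) : ZMod n) = 0 := by push_cast; linear_combination h
    exact ZMod.natCast_ne_zero_of_pos_of_lt (by norm_num) (by omega) h1
  · have h3 : ((3 : ℕ) : ZMod n) = 0 := by push_cast; linear_combination -h
    exact ZMod.natCast_ne_zero_of_pos_of_lt (by norm_num) (by omega) h3

end IsInducedCycleMap

namespace SimpleGraph

def pruneAt (G : SimpleGraph V) (v : V) (N : Set V) : SimpleGraph V where
  Adj x y := G.Adj x y ∧ (x = v → y ∈ N) ∧ (y = v → x ∈ N)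
  symm := ⟨fun _ _ ⟨h, h₁, h₂⟩ => ⟨h.symm, h₂, h₁⟩⟩
  loopless := ⟨fun x h => G.loopless.irrefl x h.1⟩

theorem pruneAt_adj {G : SimpleGraph V} {v : V} {N : Set V} {x y : V} :
    (G.pruneAt v N).Adj x y ↔ G.Adj x y ∧ (x = v → y ∈ N) ∧ (y = v → x ∈ N) :=
  Iff.rfl

theorem pruneAt_le (G : SimpleGraph V) (v : V) (N : Set V) : G.pruneAt v N ≤ G :=
  fun _ _ h => (pruneAt_adj.1 h).1

theorem chordal_pruneAt {G : SimpleGraph V} (hG : Chordal G) (v : V) {N : Set V}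
    (hN : G.IsClique N) : Chordal (G.pruneAt v N) := by
  rintro n hn ⟨f, hf⟩
  by_cases hv : ∃ i, f i = v
  · obtain ⟨i, rfl⟩ := hv
    have hpred := pruneAt_adj.1 (hf.adj_pred i)
    have hsucc := pruneAt_adj.1 (hf.adj_succ i)
    refine hf.not_adj_pred_succ hn i <| pruneAt_adj.2
      ⟨hN (hpred.2.2 rfl) (hsucc.2.1 rfl) (hf.pred_ne_succ hn i), fun h => ?_, fun h => ?_⟩
    · exact ((hf.adj_pred i).ne h).elim
    · exact ((hf.adj_succ i).ne' h).elim
  · push Not at hv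
    exact hG n hn ⟨f, hf.1, fun i j =>
      ⟨fun h => (hf.2 i j).1 ⟨h, fun h' => absurd h' (hv i), fun h' => absurd h' (hv j)⟩,
        fun h => (pruneAt_adj.1 ((hf.2 i j).2 h)).1⟩⟩

end SimpleGraph

section Completion

variable [Finite V] {G H : SimpleGraph V}

theorem fill_eq_ncard_sdiff (h : G ≤ H) : fill G H = (H.edgeSet \ G.edgeSet).ncard :=
  (Set.ncard_sdiff (SimpleGraph.edgeSet_mono h)).symm

theorem exists_not_adj_of_fill_lt {ι : Type*} [Finite ι] (h : G ≤ H) {v : V} {g : ι → V}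
    (hg : Function.Injective g) (hvg : ∀ i, ¬ G.Adj v (g i)) (hfill : fill G H < Nat.card ι) :
    ∃ i, ¬ H.Adj v (g i) := by
  by_contra! hH
  have hinj : Function.Injective fun i => s(v, g i) := fun i j hij =>
    hg (Sym2.congr_right.1 hij)
  have hsub : Set.range (fun i => s(v, g i)) ⊆ H.edgeSet \ G.edgeSet := by
    rintro _ ⟨i, rfl⟩
    exact ⟨hH i, hvg i⟩
  have := Set.ncard_le_ncard hsub
  rw [Set.ncard_range_of_injective hinj, ← fill_eq_ncard_sdiff h] at this
  omega

theorem IsMinChordalCompletion.eq_of_le {H' : SimpleGraph V} (hH : IsMinChordalCompletion G H)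
    (hH' : IsChordalCompletion G H') (h : H' ≤ H) : H' = H :=
  SimpleGraph.edgeSet_injective <| Set.eq_of_subset_of_ncard_le (SimpleGraph.edgeSet_mono h)
    (hH.2 H' hH')

end Completion

section Gadget

variable {α : Type*} {F : SimpleGraph α} {A : Set α} {K : ℕ}

theorem gadgetGraph_neighborSet_v :
    (gadgetGraph F A K).neighborSet (Sum.inr (Sum.inr ())) = Sum.inl '' A := by
  ext (u | i | u) <;> simp [gadgetGraph, gadgetRel]

theorem gadgetGraph_adj_v_inl {a : α} :
    (gadgetGraph F A K).Adj (Sum.inr (Sum.inr ())) (Sum.inl a) ↔ a ∈ A := by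
  simp [gadgetGraph, gadgetRel]

theorem gadgetGraph_adj_inl_c (a : α) (i : Fin (K + 1)) :
    (gadgetGraph F A K).Adj (Sum.inl a) (Sum.inr (Sum.inl i)) := by
  simp [gadgetGraph, gadgetRel]

theorem gadgetGraph_not_adj_v_c (i : Fin (K + 1)) :
    ¬ (gadgetGraph F A K).Adj (Sum.inr (Sum.inr ())) (Sum.inr (Sum.inl i)) := by
  simp [gadgetGraph, gadgetRel]

theorem gadgetGraph_adj_c {i : Fin (K + 1)} {y : α ⊕ Fin (K + 1) ⊕ Unit}
    (hy : y ≠ Sum.inr (Sum.inr ())) (hne : y ≠ Sum.inr (Sum.inl i)) :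
    (gadgetGraph F A K).Adj (Sum.inr (Sum.inl i)) y := by
  rcases y with u | j | u <;> simp_all [gadgetGraph, gadgetRel, eq_comm]

variable {H : SimpleGraph (α ⊕ Fin (K + 1) ⊕ Unit)}

theorem IsChordalCompletion.isClique_gadget_of_not_adj
    (hH : IsChordalCompletion (gadgetGraph F A K) H) {j : Fin (K + 1)}
    (hj : ¬ H.Adj (Sum.inr (Sum.inr ())) (Sum.inr (Sum.inl j))) :
    H.IsClique (Sum.inl '' A) := by
  rintro _ ⟨a, ha, rfl⟩ _ ⟨a', ha', rfl⟩ hne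
  exact hH.2.adj_of_cycle4 (hH.1 (gadgetGraph_adj_v_inl.2 ha)) (hH.1 (gadgetGraph_adj_inl_c a j))
    (hH.1 (gadgetGraph_adj_inl_c a' j).symm) (hH.1 (gadgetGraph_adj_v_inl.2 ha')).symm
    (by simp) hne hj

theorem IsChordalCompletion.pruneAt_gadget (hH : IsChordalCompletion (gadgetGraph F A K) H)
    (hA : H.IsClique (Sum.inl '' A)) :
    IsChordalCompletion (gadgetGraph F A K)
      (H.pruneAt (Sum.inr (Sum.inr ())) (Sum.inl '' A)) := by
  refine ⟨fun x y hxy => SimpleGraph.pruneAt_adj.2 ⟨hH.1 hxy, ?_, ?_⟩,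
    SimpleGraph.chordal_pruneAt hH.2 _ hA⟩
  · rintro rfl
    rw [← gadgetGraph_neighborSet_v]
    exact hxy
  · rintro rfl
    rw [← gadgetGraph_neighborSet_v]
    exact hxy.symm

theorem IsMinChordalCompletion.neighborSet_gadget_v [Finite α]
    (hH : IsMinChordalCompletion (gadgetGraph F A K) H)
    (hfill : fill (gadgetGraph F A K) H ≤ K) :
    H.neighborSet (Sum.inr (Sum.inr ())) = Sum.inl '' A := by
  obtain ⟨j, hj⟩ := exists_not_adj_of_fill_lt hH.1.1 (Sum.inr_injective.comp Sum.inl_injective)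
    gadgetGraph_not_adj_v_c (by simpa using Nat.lt_succ_of_le hfill)
  have hprune := hH.eq_of_le (hH.1.pruneAt_gadget (hH.1.isClique_gadget_of_not_adj hj))
    (SimpleGraph.pruneAt_le _ _ _)
  refine subset_antisymm (fun y hy => ?_) ?_
  · rw [SimpleGraph.mem_neighborSet, ← hprune] at hy
    exact (SimpleGraph.pruneAt_adj.1 hy).2.1 rfl
  · rw [← gadgetGraph_neighborSet_v]
    exact SimpleGraph.neighborSet_mono hH.1.1 _

theorem exists_eq_inl_of_gadget_fill_edge
    (hv : H.neighborSet (Sum.inr (Sum.inr ())) = Sum.inl '' A) {x y : α ⊕ Fin (K + 1) ⊕ Unit}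
    (hxy : H.Adj x y) (hG : ¬ (gadgetGraph F A K).Adj x y) : ∃ u, x = Sum.inl u := by
  rcases x with u | i | ⟨⟩
  · exact ⟨u, rfl⟩
  · by_cases hy : y = Sum.inr (Sum.inr ())
    · subst hy
      have : Sum.inr (Sum.inl i) ∈ H.neighborSet (Sum.inr (Sum.inr ())) := hxy.symm
      simp [hv] at this
    · exact (hG (gadgetGraph_adj_c hy hxy.ne')).elim
  · have : y ∈ H.neighborSet (Sum.inr (Sum.inr ())) := hxy
    rw [hv, ← gadgetGraph_neighborSet_v] at this
    exact (hG this).elim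

end Gadget

theorem gadget_min_completion_no_fill_at_C_v_general {α : Type*} [Fintype α] (F : SimpleGraph α)
    (A : Set α) (K : ℕ)
    (H : SimpleGraph (α ⊕ Fin (K + 1) ⊕ Unit))
    (hmin : IsMinChordalCompletion (gadgetGraph F A K) H)
    (hfill : fill (gadgetGraph F A K) H ≤ K) :
    (∀ x y : α ⊕ Fin (K + 1) ⊕ Unit, H.Adj x y → ¬ (gadgetGraph F A K).Adj x y →
      (∃ u : α, x = Sum.inl u) ∧ (∃ u : α, y = Sum.inl u)) ∧
    H.neighborSet (Sum.inr (Sum.inr ())) = Sum.inl '' A ∧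
    (gadgetGraph F A K).neighborSet (Sum.inr (Sum.inr ())) = Sum.inl '' A := by
  have hv := hmin.neighborSet_gadget_v hfill
  refine ⟨fun x y hxy hG => ⟨?_, ?_⟩, hv, gadgetGraph_neighborSet_v⟩
  · exact exists_eq_inl_of_gadget_fill_edge hv hxy hG
  · exact exists_eq_inl_of_gadget_fill_edge hv hxy.symm (fun h => hG h.symm)

/-- If `H` is a minimum chordal completion of the gadget graph `G` with at most `K`
fill edges, then no fill edge of `H` has an endpoint in `C ∪ {v}` (i.e. both endpoints
of every fill edge are vertices of `F`); in particular `N_H(v) = N_G(v) = A`. -/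
theorem gadget_min_completion_no_fill_at_C_v {α : Type*} [Fintype α] (F : SimpleGraph α)
    (A B : Set α) (hcover : A ∪ B = Set.univ) (hdisj : Disjoint A B)
    (hA : F.IsClique A) (hB : F.IsClique B) (k K : ℕ)
    (hK : K = k + A.ncard * (A.ncard - 1) / 2)
    (H : SimpleGraph (α ⊕ Fin (K + 1) ⊕ Unit))
    (hmin : IsMinChordalCompletion (gadgetGraph F A K) H)
    (hfill : fill (gadgetGraph F A K) H ≤ K) :
    (∀ x y : α ⊕ Fin (K + 1) ⊕ Unit, H.Adj x y → ¬ (gadgetGraph F A K).Adj x y →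
      (∃ u : α, x = Sum.inl u) ∧ (∃ u : α, y = Sum.inl u)) ∧
    H.neighborSet (Sum.inr (Sum.inr ())) = Sum.inl '' A ∧
    (gadgetGraph F A K).neighborSet (Sum.inr (Sum.inr ())) = Sum.inl '' A :=
  gadget_min_completion_no_fill_at_C_v_general F A K H hmin hfill
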